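/- arXiv:2309.01019 — 2 statements merged into one kernel-verified Lean document; each statement's English description precedes it below -/
import Mathlib

section
/- Let p, q be positive integers with gcd(p,q) = 1. The image of the map α : ℤ/(2pq) → ℤ/(2p) × ℤ/(2q), α(n) = (n mod 2p, n mod 2q), is exactly the set Γ = {(x,y) : x + y ≡ 0 (mod 2)}, where the parity of an element of ℤ/(2p) (resp. ℤ/(2q)) is well-defined since 2p (resp. 2q) is even. -/
theorem asteroid_map_range (p q : ℕ) (hp : 1 ≤ p) (hq : 1 ≤ q)
    (hpq : Nat.gcd p q = 1) :
    Set.range (fun n : ZMod (2 * p * q) =>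
      ((ZMod.castHom (⟨q, by ring⟩ : 2 * p ∣ 2 * p * q) (ZMod (2 * p)) n),
       (ZMod.castHom (⟨p, by ring⟩ : 2 * q ∣ 2 * p * q) (ZMod (2 * q)) n)))
    = {xy : ZMod (2 * p) × ZMod (2 * q) | (xy.1.val + xy.2.val) % 2 = 0} := by
  haveI : NeZero (2 * p) := ⟨by omega⟩
  haveI : NeZero (2 * q) := ⟨by omega⟩
  haveI : NeZero (2 * p * q) := ⟨by positivity⟩
  ext ⟨x, y⟩
  simp only [Set.mem_range, Set.mem_setOf_eq, Prod.mk.injEq]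
  constructor
  · rintro ⟨n, hx, hy⟩
    have hx' : x.val = n.val % (2 * p) := by
      rw [← hx, ZMod.castHom_apply, ← ZMod.natCast_val, ZMod.val_natCast]
    have hy' : y.val = n.val % (2 * q) := by
      rw [← hy, ZMod.castHom_apply, ← ZMod.natCast_val, ZMod.val_natCast]
    have h1 : n.val % (2 * p) % 2 = n.val % 2 :=
      Nat.mod_mod_of_dvd _ ⟨p, by ring⟩
    have h2 : n.val % (2 * q) % 2 = n.val % 2 :=
      Nat.mod_mod_of_dvd _ ⟨q, by ring⟩
    omega
  · intro h
    have hgcd : Nat.gcd (2 * p) (2 * q) = 2 := by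
      rw [Nat.gcd_mul_left, hpq, mul_one]
    have hmod : x.val ≡ y.val [MOD Nat.gcd (2 * p) (2 * q)] := by
      rw [hgcd]; unfold Nat.ModEq; omega
    obtain ⟨k, hk1, hk2⟩ := Nat.chineseRemainder' hmod
    refine ⟨(k : ZMod (2 * p * q)), ?_, ?_⟩
    · rw [map_natCast, show x = ((x.val : ℕ) : ZMod (2*p)) from (ZMod.natCast_rightInverse x).symm,
        ZMod.natCast_eq_natCast_iff]
      exact hk1
    · rw [map_natCast, show y = ((y.val : ℕ) : ZMod (2*q)) from (ZMod.natCast_rightInverse y).symm,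
        ZMod.natCast_eq_natCast_iff]
      exact hk2
end

section
/- Let p, q be coprime positive integers. The number of pairs (x,y) of integers with 0 < x < p, 0 < y < q, and x + y odd equals (p-1)(q-1)/2. -/
lemma count_odd_Ioo (n : ℕ) :
    ((Finset.Ioo 0 n).filter (fun y => y % 2 = 1)).card = n / 2 := by
  induction n with
  | zero => simp
  | succ n ih =>
    rcases Nat.eq_zero_or_pos n with h | h
    · subst h; decide
    · rw [show Finset.Ioo 0 (n+1) = insert n (Finset.Ioo 0 n) by
        rw [Finset.Ioo_insert_right h]
        rfl]
      rw [Finset.filter_insert]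
      by_cases hn : n % 2 = 1
      · rw [if_pos hn, Finset.card_insert_of_notMem (by simp), ih]; omega
      · rw [if_neg hn, ih]; omega

lemma count_even_Ioo (n : ℕ) :
    ((Finset.Ioo 0 n).filter (fun y => y % 2 = 0)).card = (n - 1) / 2 := by
  have h1 : ((Finset.Ioo 0 n).filter (fun y => y % 2 = 0)).card
      + ((Finset.Ioo 0 n).filter (fun y => y % 2 = 1)).card
      = (Finset.Ioo 0 n).card := by
    have h2 := Finset.card_filter_add_card_filter_not
      (s := Finset.Ioo 0 n) (p := fun y => y % 2 = 0)
    have h3 : (Finset.Ioo 0 n).filter (fun y => ¬ y % 2 = 0)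
        = (Finset.Ioo 0 n).filter (fun y => y % 2 = 1) := by
      apply Finset.filter_congr; intro x _
      constructor <;> intro h <;> omega
    rw [h3] at h2
    exact h2
  rw [count_odd_Ioo] at h1
  rw [Nat.card_Ioo] at h1
  omega

lemma key (p q : ℕ) (hp : 1 ≤ p) (hq : 1 ≤ q)
    (hne : ¬ (p % 2 = 0 ∧ q % 2 = 0)) :
    (p - 1) / 2 * (q / 2) + p / 2 * ((q - 1) / 2) = (p - 1) * (q - 1) / 2 := by
  rcases Nat.even_or_odd p with ⟨a, rfl⟩ | ⟨a, rfl⟩ <;>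
    rcases Nat.even_or_odd q with ⟨b, rfl⟩ | ⟨b, rfl⟩
  · exact absurd ⟨by omega, by omega⟩ hne
  · -- p = 2a even, q = 2b+1 odd
    obtain ⟨c, rfl⟩ : ∃ c, a = c + 1 := ⟨a - 1, by omega⟩
    rw [show c + 1 + (c + 1) - 1 = 2 * c + 1 from by omega,
        show 2 * b + 1 - 1 = 2 * b from by omega,
        show (2 * c + 1) / 2 = c from by omega,
        show (2 * b + 1) / 2 = b from by omega,
        show (c + 1 + (c + 1)) / 2 = c + 1 from by omega,
        show 2 * b / 2 = b from by omega,
        show (2 * c + 1) * (2 * b) = 2 * (c * b + (c + 1) * b) from by ring,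
        Nat.mul_div_cancel_left _ (by norm_num)]
  · -- p odd, q even
    obtain ⟨c, rfl⟩ : ∃ c, b = c + 1 := ⟨b - 1, by omega⟩
    rw [show 2 * a + 1 - 1 = 2 * a from by omega,
        show c + 1 + (c + 1) - 1 = 2 * c + 1 from by omega,
        show 2 * a / 2 = a from by omega,
        show (c + 1 + (c + 1)) / 2 = c + 1 from by omega,
        show (2 * a + 1) / 2 = a from by omega,
        show (2 * c + 1) / 2 = c from by omega,
        show 2 * a * (2 * c + 1) = 2 * (a * (c + 1) + a * c) from by ring,
        Nat.mul_div_cancel_left _ (by norm_num)]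
  · -- both odd
    rw [show 2 * a + 1 - 1 = 2 * a from by omega,
        show 2 * b + 1 - 1 = 2 * b from by omega,
        show (2 * a + 1) / 2 = a from by omega,
        show (2 * b + 1) / 2 = b from by omega,
        show 2 * a / 2 = a from by omega,
        show 2 * b / 2 = b from by omega,
        show 2 * a * (2 * b) = 2 * (a * b + a * b) from by ring,
        Nat.mul_div_cancel_left _ (by norm_num)]

theorem atomic_square_count (p q : ℕ) (hp : 1 ≤ p) (hq : 1 ≤ q)
    (hpq : Nat.gcd p q = 1) :
    (((Finset.Ioo 0 p) ×ˢ (Finset.Ioo 0 q)).filter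
      (fun xy => (xy.1 + xy.2) % 2 = 1)).card = (p - 1) * (q - 1) / 2 := by
  rw [Finset.card_filter, Finset.sum_product]
  have hinner : ∀ x : ℕ, (∑ y ∈ Finset.Ioo 0 q, if (x + y) % 2 = 1 then 1 else 0)
      = if x % 2 = 0 then q / 2 else (q - 1) / 2 := by
    intro x
    by_cases hx : x % 2 = 0
    · rw [if_pos hx, ← count_odd_Ioo q, Finset.card_filter]
      apply Finset.sum_congr rfl
      intro y _
      congr 1
      simp only [eq_iff_iff]
      omega
    · rw [if_neg hx, ← count_even_Ioo q, Finset.card_filter]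
      apply Finset.sum_congr rfl
      intro y _
      congr 1
      simp only [eq_iff_iff]
      omega
  rw [Finset.sum_congr rfl (fun x _ => hinner x)]
  rw [Finset.sum_ite, Finset.sum_const, Finset.sum_const, smul_eq_mul, smul_eq_mul]
  rw [count_even_Ioo p]
  have : (Finset.Ioo 0 p).filter (fun x => ¬ x % 2 = 0)
      = (Finset.Ioo 0 p).filter (fun x => x % 2 = 1) := by
    apply Finset.filter_congr
    intro x _
    constructor <;> intro h <;> omega
  rw [this, count_odd_Ioo p]
  -- p, q not both even
  have hne : ¬ (p % 2 = 0 ∧ q % 2 = 0) := by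
    rintro ⟨h1, h2⟩
    have : 2 ∣ Nat.gcd p q := Nat.dvd_gcd (by omega) (by omega)
    omega
  exact key p q hp hq hne
end
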